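/- Let T be any iteration of the process Central (run with 0 < ε ≤ 1/10 on a finite simple graph G with n ≥ 2 vertices) at which every edge of G has an endpoint in F_T. Then the fractional matching produced satisfies ∑_{e ∈ E} x_e(T) ≥ ν(G)/(2 + 5ε), where ν(G) denotes the maximum size of a matching of G. -/

import Mathlib

/-!
Every edge of a matching `M` has an endpoint frozen by time `T`, and a frozen vertex carries
load at least `1 - 2ε` from then on (weights never decrease). Endpoints of distinct matching
edges are distinct, and summing loads over a set of vertices counts each edge weight at most
twice, so `|M| (1 - 2ε) ≤ 2 ∑ₑ xₑ(T)`. Finally `(2 + 5ε)(1 - 2ε) = 2 + ε(1 - 10ε) ≥ 2`.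
-/

open Finset

theorem matching_card_le_vertexCover_card {V : Type*} {M : Finset (Sym2 V)}
    {F : Finset V} (hM : ∀ e ∈ M, ∀ f ∈ M, e ≠ f → ∀ v : V, v ∈ e → v ∉ f)
    (hF : ∀ e ∈ M, ∃ v ∈ F, v ∈ e) : #M ≤ #F :=
  card_le_card_of_forall_subsingleton (fun e v => v ∈ e) hF fun v _ e he f hf => by
    by_contra hef
    exact hM e he.1 f hf.1 hef v he.2 hf.2

namespace SimpleGraph

variable {V : Type*} [Fintype V] [DecidableEq V] (G : SimpleGraph V) [DecidableRel G.Adj]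

def load (y : Sym2 V → ℝ) (v : V) : ℝ :=
  ∑ e ∈ G.edgeFinset.filter (fun e => v ∈ e), y e

theorem sum_load_le_two_mul_sum {y : Sym2 V → ℝ} (hy : ∀ e ∈ G.edgeFinset, 0 ≤ y e)
    (S : Finset V) : ∑ v ∈ S, G.load y v ≤ 2 * ∑ e ∈ G.edgeFinset, y e := by
  have hcard : ∀ e : Sym2 V, #(S.filter (fun v => v ∈ e)) ≤ 2 := fun e =>
    calc #(S.filter (fun v => v ∈ e)) ≤ #e.toFinset :=
          card_le_card fun v hv => Sym2.mem_toFinset.2 (mem_filter.1 hv).2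
      _ ≤ 2 := by rw [Sym2.card_toFinset]; split_ifs <;> norm_num
  calc ∑ v ∈ S, G.load y v
      = ∑ e ∈ G.edgeFinset, #(S.filter (fun v => v ∈ e)) * y e := by
        simp only [load, sum_filter]
        rw [sum_comm]
        simp only [← sum_filter, sum_const, nsmul_eq_mul]
    _ ≤ ∑ e ∈ G.edgeFinset, 2 * y e :=
        sum_le_sum fun e he => mul_le_mul_of_nonneg_right (by exact_mod_cast hcard e) (hy e he)
    _ = 2 * ∑ e ∈ G.edgeFinset, y e := (mul_sum _ _ _).symm

structure IsCentralRun (n : ℕ) (ε : ℝ) (F : ℕ → Finset V) (x : ℕ → Sym2 V → ℝ) : Prop where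
  frozen_zero : F 0 = ∅
  weight_zero : ∀ e ∈ G.edgeFinset, x 0 e = 1 / n
  frozen_succ : ∀ t : ℕ, F (t + 1) = F t ∪ univ.filter (fun v => 1 - 2 * ε ≤ G.load (x t) v)
  weight_succ : ∀ t : ℕ, ∀ e ∈ G.edgeFinset,
    x (t + 1) e = if ∃ v ∈ F (t + 1), v ∈ e then x t e else x t e / (1 - ε)

namespace IsCentralRun

variable {G} {n : ℕ} {ε : ℝ} {F : ℕ → Finset V} {x : ℕ → Sym2 V → ℝ}

theorem weight_nonneg (h : G.IsCentralRun n ε F x) (hε : ε < 1) (t : ℕ) :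
    ∀ e ∈ G.edgeFinset, 0 ≤ x t e := by
  induction t with
  | zero => intro e he; rw [h.weight_zero e he]; positivity
  | succ t ih =>
    intro e he
    rw [h.weight_succ t e he]
    split_ifs
    · exact ih e he
    · exact div_nonneg (ih e he) (by linarith)

theorem weight_le_weight_succ (h : G.IsCentralRun n ε F x) (hε0 : 0 ≤ ε) (hε1 : ε < 1)
    (t : ℕ) {e : Sym2 V} (he : e ∈ G.edgeFinset) : x t e ≤ x (t + 1) e := by
  rw [h.weight_succ t e he]
  split_ifs
  · exact le_rfl
  · exact le_div_self (h.weight_nonneg hε1 t e he) (by linarith) (by linarith)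

theorem load_le_load_succ (h : G.IsCentralRun n ε F x) (hε0 : 0 ≤ ε) (hε1 : ε < 1)
    (t : ℕ) (v : V) : G.load (x t) v ≤ G.load (x (t + 1)) v :=
  sum_le_sum fun _ he => h.weight_le_weight_succ hε0 hε1 t (mem_filter.1 he).1

theorem one_sub_two_mul_le_load (h : G.IsCentralRun n ε F x) (hε0 : 0 ≤ ε) (hε1 : ε < 1)
    (t : ℕ) : ∀ v ∈ F t, 1 - 2 * ε ≤ G.load (x t) v := by
  induction t with
  | zero => simp [h.frozen_zero]
  | succ t ih =>
    intro v hv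
    refine le_trans ?_ (h.load_le_load_succ hε0 hε1 t v)
    rw [h.frozen_succ t, mem_union, mem_filter] at hv
    exact hv.elim (ih v) And.right

end IsCentralRun

end SimpleGraph

open SimpleGraph in
theorem central_fractional_matching_approximation_general
    {V : Type*} [Fintype V] [DecidableEq V] (G : SimpleGraph V) [DecidableRel G.Adj]
    (n : ℕ)
    (ε : ℝ) (hε0 : 0 < ε) (hε1 : ε ≤ 1 / 10)
    (F : ℕ → Finset V) (x : ℕ → Sym2 V → ℝ)
    (hF0 : F 0 = ∅)
    (hx0 : ∀ e ∈ G.edgeFinset, x 0 e = 1 / n)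
    (hF : ∀ t : ℕ, F (t + 1) = F t ∪
      Finset.univ.filter
        (fun v => 1 - 2 * ε ≤ ∑ e ∈ G.edgeFinset.filter (fun e => v ∈ e), x t e))
    (hx : ∀ t : ℕ, ∀ e ∈ G.edgeFinset,
      x (t + 1) e = if ∃ v ∈ F (t + 1), v ∈ e then x t e else x t e / (1 - ε))
    (T : ℕ) (hT : ∀ e ∈ G.edgeFinset, ∃ v ∈ F T, v ∈ e) :
    ∀ M : Finset (Sym2 V), M ⊆ G.edgeFinset →
      (∀ e ∈ M, ∀ f ∈ M, e ≠ f → ∀ v : V, v ∈ e → v ∉ f) →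
      (M.card : ℝ) / (2 + 5 * ε) ≤ ∑ e ∈ G.edgeFinset, x T e := by
  intro M hMG hM
  have hrun : G.IsCentralRun n ε F x := ⟨hF0, hx0, hF, hx⟩
  have hε_lt_one : ε < 1 := by linarith
  obtain ⟨S, hSF, hSM⟩ := exists_subset_card_eq
    (matching_card_le_vertexCover_card hM fun e he => hT e (hMG he))
  have hkey : (#M : ℝ) * (1 - 2 * ε) ≤ 2 * ∑ e ∈ G.edgeFinset, x T e :=
    calc (#M : ℝ) * (1 - 2 * ε) = ∑ _v ∈ S, (1 - 2 * ε) := by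
          rw [sum_const, nsmul_eq_mul, hSM]
      _ ≤ ∑ v ∈ S, G.load (x T) v :=
          sum_le_sum fun v hv => hrun.one_sub_two_mul_le_load hε0.le hε_lt_one T v (hSF hv)
      _ ≤ 2 * ∑ e ∈ G.edgeFinset, x T e :=
          G.sum_load_le_two_mul_sum (hrun.weight_nonneg hε_lt_one T) S
  rw [div_le_iff₀ (by linarith)]
  have hslack : 0 ≤ (#M : ℝ) * (ε * (1 - 10 * ε)) :=
    mul_nonneg (Nat.cast_nonneg _) (mul_nonneg hε0.le (by linarith))
  nlinarith

/-- If at iteration `T` of the process `Central` every edge of `G` has an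
endpoint in `F_T`, then the produced fractional matching satisfies
`∑_{e ∈ E} x_e(T) ≥ ν(G)/(2 + 5ε)`, where `ν(G)` is the maximum matching size
(equivalently, `|M|/(2+5ε) ≤ ∑_e x_e(T)` for every matching `M` of `G`). -/
theorem central_fractional_matching_approximation
    {V : Type*} [Fintype V] [DecidableEq V] (G : SimpleGraph V) [DecidableRel G.Adj]
    (n : ℕ) (hn : n = Fintype.card V) (hn2 : 2 ≤ n)
    (ε : ℝ) (hε0 : 0 < ε) (hε1 : ε ≤ 1 / 10)
    (F : ℕ → Finset V) (x : ℕ → Sym2 V → ℝ)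
    (hF0 : F 0 = ∅)
    (hx0 : ∀ e ∈ G.edgeFinset, x 0 e = 1 / n)
    (hF : ∀ t : ℕ, F (t + 1) = F t ∪
      Finset.univ.filter
        (fun v => 1 - 2 * ε ≤ ∑ e ∈ G.edgeFinset.filter (fun e => v ∈ e), x t e))
    (hx : ∀ t : ℕ, ∀ e ∈ G.edgeFinset,
      x (t + 1) e = if ∃ v ∈ F (t + 1), v ∈ e then x t e else x t e / (1 - ε))
    (T : ℕ) (hT : ∀ e ∈ G.edgeFinset, ∃ v ∈ F T, v ∈ e) :
    ∀ M : Finset (Sym2 V), M ⊆ G.edgeFinset →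
      (∀ e ∈ M, ∀ f ∈ M, e ≠ f → ∀ v : V, v ∈ e → v ∉ f) →
      (M.card : ℝ) / (2 + 5 * ε) ≤ ∑ e ∈ G.edgeFinset, x T e :=
  central_fractional_matching_approximation_general G n ε hε0 hε1 F x hF0 hx0 hF hx T hT
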